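/- A set of binom(n+r, r) points in ℙʳ (n > 0, r > 0) over a field is in generic position if and only if the points do not lie on a hypersurface of degree n. In particular, six points in ℙ² are in generic position if and only if they do not lie on a conic. -/

import Mathlib

/-- The evaluation of homogeneous degree-`m` polynomials at the family of points
(representative vectors) `v`. -/
noncomputable def evalAtPoints (k : Type*) [Field k] (N e : ℕ)
    (v : Fin e → (Fin N → k)) (m : ℕ) :
    ↥(MvPolynomial.homogeneousSubmodule (Fin N) k m) →ₗ[k] (Fin e → k) :=
  (LinearMap.pi (fun i => (MvPolynomial.aeval (v i)).toLinearMap)).comp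
    (MvPolynomial.homogeneousSubmodule (Fin N) k m).subtype

/-- The points represented by `v` are in generic position: the Hilbert function
of their homogeneous coordinate ring, i.e. the rank of the evaluation map on
degree-`m` forms, is maximal for every `m`. -/
noncomputable def InGenericPosition (k : Type*) [Field k] (r e : ℕ)
    (v : Fin e → (Fin (r + 1) → k)) : Prop :=
  ∀ m : ℕ, Module.finrank k (LinearMap.range (evalAtPoints k (r + 1) e v m)) =
    min e (Nat.choose (m + r) r)

open MvPolynomial

lemma evalAtPoints_apply (k : Type*) [Field k] (N e : ℕ)
    (v : Fin e → (Fin N → k)) (m : ℕ) (f : ↥(MvPolynomial.homogeneousSubmodule (Fin N) k m))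
    (i : Fin e) : evalAtPoints k N e v m f i = MvPolynomial.eval (v i) f.1 := rfl

noncomputable def degSym (N m : ℕ) :
    {d : Fin N →₀ ℕ // Finsupp.degree d = m} ≃ Sym (Fin N) m :=
  (Multiset.toFinsupp (α := Fin N)).toEquiv.symm.subtypeEquiv (fun d => by
    show d.degree = m ↔ Multiset.card (Multiset.toFinsupp.symm d) = m
    rw [show (Multiset.toFinsupp (α := Fin N)).symm d = Finsupp.toMultiset d from rfl,
      Finsupp.card_toMultiset]
    rfl)

set_option maxHeartbeats 2000000 in
lemma finrank_homog (k : Type*) [Field k] (N m : ℕ) :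
    Module.finrank k (MvPolynomial.homogeneousSubmodule (Fin N) k m)
      = (N + m - 1).choose m := by
  rw [homogeneousSubmodule_eq_finsupp_supported]
  haveI I1 : Fintype {d : Fin N →₀ ℕ // Finsupp.degree d = m} :=
    Fintype.ofEquiv _ (degSym N m).symm
  haveI I2 : Fintype ↥{d : Fin N →₀ ℕ | Finsupp.degree d = m} := I1
  rw [LinearEquiv.finrank_eq (AddMonoidAlgebra.supportedEquivFinsupp _), Module.finrank_finsupp_self]
  refine (@Fintype.card_congr' _ _ I2 I1 rfl).trans ((Fintype.card_congr (degSym N m)).trans ?_)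
  rw [Sym.card_sym_eq_choose, Fintype.card_fin]

instance fd_homog (k : Type*) [Field k] (N m : ℕ) :
    FiniteDimensional k (MvPolynomial.homogeneousSubmodule (Fin N) k m) := by
  rw [homogeneousSubmodule_eq_finsupp_supported]
  haveI : Fintype ↥{d : Fin N →₀ ℕ | Finsupp.degree d = m} :=
    Set.Finite.fintype ((Finsupp.finite_of_degree_le m).subset (fun d hd => le_of_eq hd))
  exact Module.Finite.equiv (AddMonoidAlgebra.supportedEquivFinsupp _).symm

/-- A set of `(n+r).choose r` (distinct) points in `ℙʳ`
(`n > 0`, `r > 0`) over a field is in generic position if and only if the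
points do not lie on a hypersurface of degree `n`. (In particular, six points
in `ℙ²` are in generic position iff they do not lie on a conic: the case
`n = 2`, `r = 2`.) -/
theorem inGenericPosition_iff_not_on_hypersurface
    (k : Type*) [Field k] (n r : ℕ) (hn : 0 < n) (hr : 0 < r)
    (v : Fin (Nat.choose (n + r) r) → (Fin (r + 1) → k))
    (hv0 : ∀ i, v i ≠ 0)
    (hdist : ∀ i j, i ≠ j → ∀ c : k, v i ≠ c • v j) :
    InGenericPosition k r (Nat.choose (n + r) r) v ↔
    ¬ ∃ f ∈ MvPolynomial.homogeneousSubmodule (Fin (r + 1)) k n,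
        f ≠ 0 ∧ ∀ i, MvPolynomial.eval (v i) f = 0 := by
  classical
  have hdim : ∀ m, Module.finrank k (homogeneousSubmodule (Fin (r+1)) k m)
      = (m + r).choose r := by
    intro m
    have h2 : (m + r).choose m = (m + r).choose r := by
      have h3 := Nat.choose_symm (Nat.le_add_left r m)
      rwa [Nat.add_sub_cancel] at h3
    rw [finrank_homog, show r + 1 + m - 1 = m + r by omega, h2]
  have key : ∀ m, Function.Injective (evalAtPoints k (r+1) (Nat.choose (n + r) r) v m) ↔
      ¬ ∃ f ∈ MvPolynomial.homogeneousSubmodule (Fin (r + 1)) k m,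
        f ≠ 0 ∧ ∀ i, MvPolynomial.eval (v i) f = 0 := by
    intro m
    constructor
    · rintro hinj ⟨f, hf, hf0, hev⟩
      have : evalAtPoints k (r+1) (Nat.choose (n + r) r) v m ⟨f, hf⟩
          = evalAtPoints k (r+1) (Nat.choose (n + r) r) v m 0 := by
        ext i; rw [evalAtPoints_apply, hev i]; simp [evalAtPoints_apply]
      exact hf0 (congrArg Subtype.val (hinj this))
    · intro hno
      rw [injective_iff_map_eq_zero]
      rintro ⟨f, hf⟩ hz
      by_contra hne
      refine hno ⟨f, hf, fun h0 => hne (Subtype.ext h0), fun i => ?_⟩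
      have := congrFun hz i
      rwa [evalAtPoints_apply] at this
  constructor
  · rintro h hex
    have hinj : Function.Injective (evalAtPoints k (r+1) (Nat.choose (n + r) r) v n) := by
      have hrk := h n
      rw [min_self] at hrk
      rw [← LinearMap.ker_eq_bot, ← Submodule.finrank_eq_zero]
      have hsum := LinearMap.finrank_range_add_finrank_ker
        (evalAtPoints k (r+1) (Nat.choose (n + r) r) v n)
      rw [hrk, hdim n] at hsum
      omega
    exact (key n).mp hinj hex
  · intro hno m
    have hinjn := (key n).mpr hno
    rcases le_or_gt m n with hm | hm
    · have hinj : Function.Injective (evalAtPoints k (r+1) (Nat.choose (n + r) r) v m) := by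
        rw [key m]
        rintro ⟨f, hf, hf0, hev⟩
        refine hno ⟨f * X 0 ^ (n - m), ?_, ?_, fun i => ?_⟩
        · rw [mem_homogeneousSubmodule] at hf ⊢
          have := hf.mul ((isHomogeneous_X k (0 : Fin (r+1))).pow (n - m))
          rwa [show m + 1 * (n - m) = n by omega] at this
        · exact mul_ne_zero hf0 (pow_ne_zero _ (X_ne_zero _))
        · rw [map_mul, hev i, zero_mul]
      rw [LinearMap.finrank_range_of_inj hinj, hdim m]
      have hle : (m + r).choose r ≤ (n + r).choose r := Nat.choose_le_choose r (by omega)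
      omega
    · have hsurj : Function.Surjective (evalAtPoints k (r+1) (Nat.choose (n + r) r) v n) := by
        rw [← LinearMap.injective_iff_surjective_of_finrank_eq_finrank]
        · exact hinjn
        · rw [hdim n, Module.finrank_fin_fun]
      have htop : LinearMap.range (evalAtPoints k (r+1) (Nat.choose (n + r) r) v m) = ⊤ := by
        rw [← top_le_iff, ← (Pi.basisFun k (Fin (Nat.choose (n + r) r))).span_eq,
          Submodule.span_le]
        rintro w ⟨i, rfl⟩
        rw [Pi.basisFun_apply]
        obtain ⟨fi, hfi⟩ := hsurj (Pi.single i 1)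
        obtain ⟨j, hj⟩ : ∃ j, v i j ≠ 0 := by
          by_contra hc
          push_neg at hc
          exact hv0 i (funext hc)
        have hcne : (v i j) ^ (m - n) ≠ 0 := pow_ne_zero _ hj
        have hg : (fi.1 * X j ^ (m - n)) ∈ homogeneousSubmodule (Fin (r+1)) k m := by
          rw [mem_homogeneousSubmodule]
          have hfi1 : fi.1.IsHomogeneous n := fi.2
          have := hfi1.mul ((isHomogeneous_X k j).pow (m - n))
          rwa [show n + 1 * (m - n) = m by omega] at this
        have hw : evalAtPoints k (r+1) (Nat.choose (n + r) r) v m ⟨_, hg⟩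
            = (v i j) ^ (m - n) • (Pi.single i 1 : Fin (Nat.choose (n + r) r) → k) := by
          ext l
          rw [evalAtPoints_apply]
          simp only [map_mul, map_pow, eval_X]
          have hfil : MvPolynomial.eval (v l) fi.1
              = (Pi.single i 1 : Fin (Nat.choose (n + r) r) → k) l := by
            rw [← evalAtPoints_apply k (r+1) (Nat.choose (n + r) r) v n fi l, hfi]
          rw [hfil]
          rcases eq_or_ne l i with rfl | hli
          · simp [mul_comm]
          · simp [Pi.single_eq_of_ne hli]
        have hmem : (v i j) ^ (m - n) • (Pi.single i 1 : Fin (Nat.choose (n + r) r) → k)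
            ∈ LinearMap.range (evalAtPoints k (r+1) (Nat.choose (n + r) r) v m) := ⟨_, hw⟩
        have hsm := (LinearMap.range (evalAtPoints k (r+1) (Nat.choose (n + r) r) v m)).smul_mem
          ((v i j) ^ (m - n))⁻¹ hmem
        rwa [smul_smul, inv_mul_cancel₀ hcne, one_smul] at hsm
      rw [htop, finrank_top, Module.finrank_fin_fun]
      have hle : (n + r).choose r ≤ (m + r).choose r := Nat.choose_le_choose r (by omega)
      omega
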